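/- Let n ≥ 1, s ∈ (0,1), N ∈ ℕ, Λ ≥ 0 and R > 0. Let T, S ⊂ ℝⁿ be measurable sets with T of finite Lebesgue measure and ‖x − y‖ ≤ R for all x ∈ T and y ∈ S. Let φ₁, …, φ_N : ℝⁿ → ℝ be Λ-Lipschitz functions and c₁, …, c_N ∈ ℝ. Then ∬_{T×S} ( Σ_{i=1}^N c_i (φ_i(x) − φ_i(y)) )² ‖x − y‖^{−(n+2s)} dy dx ≤ N · Λ² · ( Σ_{i=1}^N c_i² ) · ω_{n−1} · |T| · R^{2−2s} / (2 − 2s). -/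

import Mathlib

/-!
By Cauchy–Schwarz and the Lipschitz bounds, `(∑ cᵢ (φᵢ x - φᵢ y))² ≤ N Λ² (∑ cᵢ²) ‖x - y‖²`, so the
integrand is at most a multiple of `‖x - y‖ ^ (2 - n - 2s)`. For `x ∈ T` the set `S` lies in the
closed ball of radius `R` about `x`, and in polar coordinates
`∫_{B_R} ‖z‖ ^ (2 - n - 2s) dz = ω_{n-1} ∫₀^R r ^ (1 - 2s) dr = ω_{n-1} R ^ (2 - 2s) / (2 - 2s)`;
integrating this bound over `T` gives the factor `|T|`.
-/

open MeasureTheory Metric Set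

open scoped ENNReal

theorem lintegral_Ioc_rpow {q R : ℝ} (hq : -1 < q) (hR : 0 ≤ R) :
    ∫⁻ r in Ioc 0 R, ENNReal.ofReal (r ^ q) = ENNReal.ofReal (R ^ (q + 1) / (q + 1)) := by
  rw [← ofReal_integral_eq_lintegral_ofReal (intervalIntegral.intervalIntegrable_rpow' hq).1
    ((ae_restrict_mem measurableSet_Ioc).mono fun r hr => Real.rpow_nonneg hr.1.le q),
    ← intervalIntegral.integral_of_le hR, integral_rpow (Or.inl hq),
    Real.zero_rpow (by linarith), sub_zero]

theorem sq_sum_mul_le_card_mul_sq_mul_sum_sq {ι : Type*} [Fintype ι] (c a : ι → ℝ) {L : ℝ}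
    (ha : ∀ i, |a i| ≤ L) :
    (∑ i, c i * a i) ^ 2 ≤ Fintype.card ι * L ^ 2 * ∑ i, c i ^ 2 :=
  calc (∑ i, c i * a i) ^ 2 ≤ (∑ i, c i ^ 2) * ∑ i, a i ^ 2 := Finset.sum_mul_sq_le_sq_mul_sq _ _ _
    _ ≤ (∑ i, c i ^ 2) * ∑ _i : ι, L ^ 2 := by
      refine mul_le_mul_of_nonneg_left (Finset.sum_le_sum fun i _ => ?_) (by positivity)
      exact sq_le_sq.mpr ((ha i).trans (le_abs_self L))
    _ = Fintype.card ι * L ^ 2 * ∑ i, c i ^ 2 := by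
      rw [Finset.sum_const, Finset.card_univ, nsmul_eq_mul]; ring

theorem mul_rpow_neg_le_of_le_mul_sq {a t K : ℝ} (q : ℝ) (ht : 0 ≤ t) (hK : 0 ≤ K)
    (ha : a ≤ K * t ^ 2) : a * t ^ (-q) ≤ K * t ^ (2 - q) := by
  rcases ht.eq_or_lt with rfl | ht
  · have : a ≤ 0 := by simpa using ha
    exact (mul_nonpos_of_nonpos_of_nonneg this (Real.rpow_nonneg le_rfl _)).trans
      (mul_nonneg hK (Real.rpow_nonneg le_rfl _))
  · calc a * t ^ (-q) ≤ K * t ^ 2 * t ^ (-q) := by gcongr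
      _ = K * t ^ (2 - q) := by
        rw [mul_assoc, ← Real.rpow_natCast, ← Real.rpow_add ht, Nat.cast_ofNat, sub_eq_add_neg]

theorem sq_sum_mul_sub_mul_norm_rpow_le {ι E : Type*} [Fintype ι] [SeminormedAddCommGroup E]
    {φ : ι → E → ℝ} {Λ : ℝ} (hφ : ∀ i x y, |φ i x - φ i y| ≤ Λ * ‖x - y‖) (c : ι → ℝ) (q : ℝ)
    (x y : E) :
    (∑ i, c i * (φ i x - φ i y)) ^ 2 * ‖x - y‖ ^ (-q) ≤
      Fintype.card ι * Λ ^ 2 * (∑ i, c i ^ 2) * ‖x - y‖ ^ (2 - q) := by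
  refine mul_rpow_neg_le_of_le_mul_sq q (norm_nonneg _) (by positivity) ?_
  refine (sq_sum_mul_le_card_mul_sq_mul_sum_sq c _ (hφ · x y)).trans_eq ?_
  ring

section AddHaar

variable {E : Type*} [NormedAddCommGroup E] [NormedSpace ℝ E] [FiniteDimensional ℝ E]
  [MeasurableSpace E] [BorelSpace E] [Nontrivial E] (μ : Measure E) [μ.IsAddHaarMeasure]

local notation "dim" => Module.finrank ℝ

theorem lintegral_fun_norm_addHaar {g : ℝ → ℝ≥0∞} (hg : Measurable g) :
    ∫⁻ x, g ‖x‖ ∂μ = dim E * μ (ball 0 1) * ∫⁻ r in Ioi 0, ENNReal.ofReal (r ^ (dim E - 1)) * g r :=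
  calc ∫⁻ x, g ‖x‖ ∂μ = ∫⁻ x : ({0}ᶜ : Set E), g ‖(x : E)‖ ∂μ.comap (↑) := by
        rw [lintegral_subtype_comap (measurableSet_singleton _).compl (fun x => g ‖x‖),
          restrict_compl_singleton]
    _ = ∫⁻ x, g x.2 ∂μ.toSphere.prod (.volumeIoiPow (dim E - 1)) := by
        simpa using (μ.measurePreserving_homeomorphUnitSphereProd.lintegral_comp_emb
          (Homeomorph.measurableEmbedding _) (fun x => g x.2))
    _ = μ.toSphere univ * ∫⁻ r, g r ∂.volumeIoiPow (dim E - 1) := by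
        simpa using lintegral_prod_mul (μ := μ.toSphere) (f := fun _ => 1)
          aemeasurable_const (hg.comp measurable_subtype_coe).aemeasurable
    _ = _ := by
        rw [μ.toSphere_apply_univ, Measure.volumeIoiPow, lintegral_withDensity_eq_lintegral_mul _
          (measurable_subtype_coe.pow_const _).ennreal_ofReal (g := fun r : Ioi (0 : ℝ) => g r)
          (hg.comp measurable_subtype_coe),
          ← lintegral_subtype_comap measurableSet_Ioi (fun r => ENNReal.ofReal (r ^ (dim E - 1)) * g r)]
        rfl

theorem lintegral_closedBall_norm_rpow {p R : ℝ} (hp : 0 < dim E + p) (hR : 0 ≤ R) :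
    ∫⁻ y in closedBall 0 R, ENNReal.ofReal (‖y‖ ^ p) ∂μ =
      dim E * μ (ball 0 1) * ENNReal.ofReal (R ^ (dim E + p) / (dim E + p)) := by
  have hdim : 1 ≤ dim E := Module.finrank_pos
  have hg : Measurable ((Iic R).indicator fun r : ℝ => ENNReal.ofReal (r ^ p)) :=
    (by fun_prop : Measurable fun r : ℝ => ENNReal.ofReal (r ^ p)).indicator measurableSet_Iic
  have hradial : ∀ r ∈ Ioc 0 R, ENNReal.ofReal (r ^ (dim E - 1)) * ENNReal.ofReal (r ^ p) =
      ENNReal.ofReal (r ^ ((dim E - 1 : ℝ) + p)) := fun r hr => by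
    rw [← ENNReal.ofReal_mul (pow_nonneg hr.1.le _), ← Real.rpow_natCast, ← Real.rpow_add hr.1,
      Nat.cast_sub hdim, Nat.cast_one]
  calc ∫⁻ y in closedBall 0 R, ENNReal.ofReal (‖y‖ ^ p) ∂μ
      = ∫⁻ y, (Iic R).indicator (fun r => ENNReal.ofReal (r ^ p)) ‖y‖ ∂μ := by
        rw [← lintegral_indicator measurableSet_closedBall]
        congr 1 with y
        simp [indicator]
    _ = dim E * μ (ball 0 1) * ∫⁻ r in Ioc 0 R, ENNReal.ofReal (r ^ ((dim E - 1 : ℝ) + p)) := by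
        rw [lintegral_fun_norm_addHaar μ hg, ← setLIntegral_congr_fun measurableSet_Ioc hradial]
        simp_rw [← indicator_mul_right _ fun r : ℝ => ENNReal.ofReal (r ^ (dim E - 1))]
        rw [lintegral_indicator measurableSet_Iic, Measure.restrict_restrict measurableSet_Iic,
          inter_comm, Ioi_inter_Iic]
    _ = _ := by
        rw [lintegral_Ioc_rpow (by linarith) hR, show (dim E - 1 : ℝ) + p + 1 = dim E + p by ring]

theorem setLIntegral_norm_sub_rpow_le {p R : ℝ} (hp : 0 < dim E + p) (hR : 0 ≤ R) {x : E}
    {S : Set E} (hS : ∀ y ∈ S, ‖x - y‖ ≤ R) :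
    ∫⁻ y in S, ENNReal.ofReal (‖x - y‖ ^ p) ∂μ ≤
      dim E * μ (ball 0 1) * ENNReal.ofReal (R ^ (dim E + p) / (dim E + p)) :=
  calc ∫⁻ y in S, ENNReal.ofReal (‖x - y‖ ^ p) ∂μ
      ≤ ∫⁻ y in (· - x) ⁻¹' closedBall 0 R, ENNReal.ofReal (‖y - x‖ ^ p) ∂μ := by
        simp_rw [norm_sub_rev x]
        exact lintegral_mono_set fun y hy => by simpa [norm_sub_rev] using hS y hy
    _ = ∫⁻ z in closedBall 0 R, ENNReal.ofReal (‖z‖ ^ p) ∂μ :=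
        (measurePreserving_sub_right μ x).setLIntegral_comp_preimage_emb
          (measurableEmbedding_subRight x) (fun z => ENNReal.ofReal (‖z‖ ^ p)) _
    _ = _ := lintegral_closedBall_norm_rpow μ hp hR

end AddHaar

theorem stmt8_general (n : ℕ) (hn : 1 ≤ n) (s : ℝ) (hs : s ∈ Set.Ioo (0:ℝ) 1) (N : ℕ)
    (Λ R : ℝ) (hR : 0 < R)
    (T S : Set (EuclideanSpace ℝ (Fin n)))
    (hTfin : volume T < ⊤)
    (hTS : ∀ x ∈ T, ∀ y ∈ S, ‖x - y‖ ≤ R)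
    (φ : Fin N → EuclideanSpace ℝ (Fin n) → ℝ)
    (hφ : ∀ i, ∀ x y : EuclideanSpace ℝ (Fin n), |φ i x - φ i y| ≤ Λ * ‖x - y‖)
    (c : Fin N → ℝ) :
    (∫⁻ x in T, ∫⁻ y in S,
        ENNReal.ofReal ((∑ i, c i * (φ i x - φ i y)) ^ 2 * ‖x - y‖ ^ (-((n : ℝ) + 2 * s)))) ≤
      ENNReal.ofReal ((N : ℝ) * Λ ^ 2 * (∑ i, c i ^ 2) *
        (n * (volume (Metric.ball (0 : EuclideanSpace ℝ (Fin n)) 1)).toReal) *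
        (volume T).toReal * R ^ (2 - 2 * s) / (2 - 2 * s)) := by
  have : NeZero n := ⟨by omega⟩
  set K : ℝ := N * Λ ^ 2 * ∑ i, c i ^ 2
  have hK : 0 ≤ K := by positivity
  have hexp : (n : ℝ) + (2 - (n + 2 * s)) = 2 - 2 * s := by ring
  set C := ENNReal.ofReal K *
    (n * volume (ball (0 : EuclideanSpace ℝ (Fin n)) 1) * ENNReal.ofReal (R ^ (2 - 2 * s) / (2 - 2 * s)))
  have hinner : ∀ x ∈ T, ∫⁻ y in S,
      ENNReal.ofReal ((∑ i, c i * (φ i x - φ i y)) ^ 2 * ‖x - y‖ ^ (-((n : ℝ) + 2 * s))) ≤ C :=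
    fun x hx => calc
      _ ≤ ∫⁻ y in S, ENNReal.ofReal K * ENNReal.ofReal (‖x - y‖ ^ (2 - ((n : ℝ) + 2 * s))) :=
        lintegral_mono fun y => by
          rw [← ENNReal.ofReal_mul hK]
          refine ENNReal.ofReal_le_ofReal ((sq_sum_mul_sub_mul_norm_rpow_le hφ c _ x y).trans_eq ?_)
          rw [Fintype.card_fin]
      _ = ENNReal.ofReal K * ∫⁻ y in S, ENNReal.ofReal (‖x - y‖ ^ (2 - ((n : ℝ) + 2 * s))) :=
        lintegral_const_mul' _ _ ENNReal.ofReal_ne_top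
      _ ≤ C := by
        have hball := setLIntegral_norm_sub_rpow_le volume (p := 2 - ((n : ℝ) + 2 * s))
          (by rw [finrank_euclideanSpace_fin, hexp]; linarith [hs.2]) hR.le (hTS x hx)
        rw [finrank_euclideanSpace_fin, hexp] at hball
        exact mul_le_mul_right hball _
  calc _ ≤ ∫⁻ _ in T, C := setLIntegral_mono measurable_const hinner
    _ = C * volume T := setLIntegral_const T C
    _ = _ := by
      rw [mul_div_assoc]
      simp (disch := positivity) only [C, K, ENNReal.ofReal_mul, ENNReal.ofReal_natCast,
        ENNReal.ofReal_toReal measure_ball_lt_top.ne, ENNReal.ofReal_toReal hTfin.ne]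
      ring

/-- **Core estimate of Proposition 4.2 (local stability of `I_h`).**
Let `n ≥ 1`, `s ∈ (0,1)`, `N ∈ ℕ`, `Λ ≥ 0`, `R > 0`. Let `T, S ⊂ ℝⁿ` be measurable with
`|T| < ∞` and `‖x−y‖ ≤ R` for all `x ∈ T`, `y ∈ S`. If `φ₁,…,φ_N` are `Λ`-Lipschitz and
`c₁,…,c_N ∈ ℝ`, then
`∬_{T×S} (Σᵢ cᵢ (φᵢ(x)−φᵢ(y)))² ‖x−y‖^{−(n+2s)} dy dx
  ≤ N Λ² (Σᵢ cᵢ²) ω_{n−1} |T| R^{2−2s}/(2−2s)`, where `ω_{n−1} = n·vol(B₁)`. -/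
theorem stmt8 (n : ℕ) (hn : 1 ≤ n) (s : ℝ) (hs : s ∈ Set.Ioo (0:ℝ) 1) (N : ℕ)
    (Λ R : ℝ) (hΛ : 0 ≤ Λ) (hR : 0 < R)
    (T S : Set (EuclideanSpace ℝ (Fin n))) (hT : MeasurableSet T) (hS : MeasurableSet S)
    (hTfin : volume T < ⊤)
    (hTS : ∀ x ∈ T, ∀ y ∈ S, ‖x - y‖ ≤ R)
    (φ : Fin N → EuclideanSpace ℝ (Fin n) → ℝ)
    (hφ : ∀ i, ∀ x y : EuclideanSpace ℝ (Fin n), |φ i x - φ i y| ≤ Λ * ‖x - y‖)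
    (c : Fin N → ℝ) :
    (∫⁻ x in T, ∫⁻ y in S,
        ENNReal.ofReal ((∑ i, c i * (φ i x - φ i y)) ^ 2 * ‖x - y‖ ^ (-((n : ℝ) + 2 * s)))) ≤
      ENNReal.ofReal ((N : ℝ) * Λ ^ 2 * (∑ i, c i ^ 2) *
        (n * (volume (Metric.ball (0 : EuclideanSpace ℝ (Fin n)) 1)).toReal) *
        (volume T).toReal * R ^ (2 - 2 * s) / (2 - 2 * s)) :=
  stmt8_general n hn s hs N Λ R hR T S hTfin hTS φ hφ c
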